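/- arXiv:1608.04603 — 4 statements merged into one kernel-verified Lean document; each statement's English description precedes it below -/
import Mathlib

section
/- Let A and B be real symmetric N×N matrices, and let a₁, b₁ be real numbers such that A − a₁I and B − b₁I are positive definite. Let λ₁ ≥ … ≥ λ_N be the eigenvalues of A and μ₁ ≥ … ≥ μ_N the eigenvalues of B, both listed in decreasing order. Then tr((A−a₁I)^{-1}(B−b₁I)(A−a₁I)^{-1}) ≥ Σ_{i=1}^N (μ_i − b₁)/(λ_i − a₁)². Moreover, if equality holds then A and B commute, and there is an orthogonal matrix Q with Q^{-1}AQ = diag(λ₁,…,λ_N) and Q^{-1}BQ = diag(μ₁,…,μ_N). -/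
/-!
Write `A - a₁ • 1 = P D Pᵀ`, `B - b₁ • 1 = R D' Rᵀ` and `S = Pᵀ R`. The trace equals
`∑ i j, S i j ^ 2 * c i * d j` with `c i = (λ i - a₁)⁻²` increasing and `d j = μ j - b₁`
decreasing, and `W = (S i j ^ 2)` is doubly stochastic. By Birkhoff's theorem and the
rearrangement inequality such a sum is at least `∑ i, c i * d i`.

In the equality case, subtracting from `c` and `d` multiples of the indicators of their jumps
splits the defect into nonnegative defects, which must all vanish; so `W` vanishes on every block
below a jump of `c` and left of an earlier jump of `d`. Hence `S i j ≠ 0` only if some index `m`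
carries both `λ i` and `μ j`. This pattern forces the top eigenspace of `A` into an eigenspace
of `B` (or vice versa); removing it and inducting shows that the joint eigenspaces have the
dimensions prescribed by the pairs `(λ m, μ m)`, and their orthonormal bases form `Q`.
-/

open Matrix Finset Submodule Module

theorem IsUpperSet.monotone_indicator_one {ι : Type*} [Preorder ι] {s : Set ι}
    (hs : IsUpperSet s) : Monotone (s.indicator (1 : ι → ℝ)) := fun x y hxy => by
  by_cases hx : x ∈ s
  · simp [hx, hs hxy hx]
  · rw [Set.indicator_of_notMem hx]
    exact Set.indicator_nonneg (fun _ _ => zero_le_one) _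

theorem IsLowerSet.antitone_indicator_one {ι : Type*} [Preorder ι] {s : Set ι}
    (hs : IsLowerSet s) : Antitone (s.indicator (1 : ι → ℝ)) := fun x y hxy => by
  by_cases hy : y ∈ s
  · simp [hy, hs hxy hy]
  · rw [Set.indicator_of_notMem hy]
    exact Set.indicator_nonneg (fun _ _ => zero_le_one) _

theorem Monotone.sub_smul_indicator_Ioi {ι : Type*} [LinearOrder ι] {c : ι → ℝ}
    (hc : Monotone c) {k k' : ι} (hk : k ⋖ k') :
    Monotone (c - (c k' - c k) • (Set.Ioi k).indicator 1) := by
  intro x y hxy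
  by_cases hy : k < y
  · by_cases hx : k < x
    · simpa [hx, hy] using hc hxy
    · simp only [Pi.sub_apply, Pi.smul_apply, Set.indicator_of_mem (Set.mem_Ioi.2 hy),
        Set.indicator_of_notMem (Set.notMem_Ioi.2 (not_lt.1 hx)), Pi.one_apply, smul_eq_mul]
      linarith [hc (not_lt.1 hx), hc (hk.ge_of_gt hy)]
  · have hx : ¬k < x := fun hx => hy (hx.trans_le hxy)
    simpa [hx, hy] using hc hxy

theorem Antitone.sub_smul_indicator_Iic {ι : Type*} [LinearOrder ι] {d : ι → ℝ}
    (hd : Antitone d) {l l' : ι} (hl : l ⋖ l') :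
    Antitone (d - (d l - d l') • (Set.Iic l).indicator 1) := by
  intro x y hxy
  by_cases hx : x ≤ l
  · by_cases hy : y ≤ l
    · simpa [hx, hy] using hd hxy
    · simp only [Pi.sub_apply, Pi.smul_apply, Set.indicator_of_mem (Set.mem_Iic.2 hx),
        Set.indicator_of_notMem (Set.notMem_Iic.2 (not_le.1 hy)), Pi.one_apply, smul_eq_mul]
      linarith [hd hx, hd (hl.ge_of_gt (not_le.1 hy))]
  · have hy : ¬y ≤ l := fun hy => hx (hxy.trans hy)
    simpa [hx, hy] using hd hxy

namespace Matrix

variable {ι : Type*} [Fintype ι] [DecidableEq ι] [LinearOrder ι] {W : Matrix ι ι ℝ}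
  {c d : ι → ℝ}

theorem dotProduct_le_dotProduct_mulVec_of_mem_doublyStochastic
    (hW : W ∈ doublyStochastic ℝ ι) (hc : Monotone c) (hd : Antitone d) :
    c ⬝ᵥ d ≤ c ⬝ᵥ (W *ᵥ d) := by
  have hconv : Convex ℝ {M : Matrix ι ι ℝ | c ⬝ᵥ d ≤ c ⬝ᵥ (M *ᵥ d)} :=
    convex_halfSpace_ge ⟨fun M N => by simp [add_mulVec, dotProduct_add],
      fun r M => by simp [smul_mulVec, dotProduct_smul]⟩ _
  rw [← SetLike.mem_coe, doublyStochastic_eq_convexHull_permMatrix] at hW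
  refine convexHull_min ?_ hconv hW
  rintro _ ⟨σ, rfl⟩
  simpa [permMatrix_mulVec, dotProduct] using
    (hc.antivary hd).sum_mul_le_sum_mul_comp_perm (σ := σ)

theorem indicator_dotProduct_mulVec_indicator_eq_zero (hW : W ∈ doublyStochastic ℝ ι)
    (hc : Monotone c) (hd : Antitone d) (heq : c ⬝ᵥ (W *ᵥ d) = c ⬝ᵥ d) {k k' l l' : ι}
    (hk : k ⋖ k') (hck : c k < c k') (hl : l ⋖ l') (hdl : d l' < d l) (hlk : l ≤ k) :
    (Set.Ioi k).indicator 1 ⬝ᵥ (W *ᵥ (Set.Iic l).indicator 1) = 0 := by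
  set χ : ι → ℝ := (Set.Ioi k).indicator 1
  set ψ : ι → ℝ := (Set.Iic l).indicator 1
  have hχ : Monotone χ := (isUpperSet_Ioi (a := k)).monotone_indicator_one
  have hψ : Antitone ψ := (isLowerSet_Iic (a := l)).antitone_indicator_one
  have hgap : ∀ {c d : ι → ℝ}, Monotone c → Antitone d → 0 ≤ c ⬝ᵥ (W *ᵥ d) - c ⬝ᵥ d :=
    fun hc hd => sub_nonneg.2 (dotProduct_le_dotProduct_mulVec_of_mem_doublyStochastic hW hc hd)
  have hχψ : χ ⬝ᵥ ψ = 0 := Finset.sum_eq_zero fun x _ => by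
    by_cases hx : k < x
    · simp [χ, ψ, hx, (hlk.trans_lt hx).not_ge]
    · simp [χ, hx]
  set c₁ := c - (c k' - c k) • χ
  set d₁ := d - (d l - d l') • ψ
  have hsplit : c ⬝ᵥ (W *ᵥ d) - c ⬝ᵥ d = (c₁ ⬝ᵥ (W *ᵥ d) - c₁ ⬝ᵥ d)
      + (c k' - c k) * (χ ⬝ᵥ (W *ᵥ d₁) - χ ⬝ᵥ d₁)
      + (c k' - c k) * (d l - d l') * (χ ⬝ᵥ (W *ᵥ ψ) - χ ⬝ᵥ ψ) := by
    simp only [c₁, d₁, sub_dotProduct, smul_dotProduct, mulVec_sub, mulVec_smul, dotProduct_sub,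
      dotProduct_smul, smul_eq_mul]
    ring
  have h₁ := hgap (hc.sub_smul_indicator_Ioi hk) hd
  have h₂ := mul_nonneg (sub_pos.2 hck).le (hgap hχ (hd.sub_smul_indicator_Iic hl))
  have h₃ := hgap hχ hψ
  have hpos := mul_pos (sub_pos.2 hck) (sub_pos.2 hdl)
  rw [hχψ, sub_zero] at hsplit h₃
  nlinarith

theorem apply_eq_zero_of_dotProduct_mulVec_eq (hW : W ∈ doublyStochastic ℝ ι)
    (hc : Monotone c) (hd : Antitone d) (heq : c ⬝ᵥ (W *ᵥ d) = c ⬝ᵥ d) {k k' l l' : ι}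
    (hk : k ⋖ k') (hck : c k < c k') (hl : l ⋖ l') (hdl : d l' < d l) (hlk : l ≤ k) {i j : ι}
    (hi : k < i) (hj : j ≤ l) : W i j = 0 := by
  have hW0 := (mem_doublyStochastic_iff_sum.1 hW).1
  have hblock := indicator_dotProduct_mulVec_indicator_eq_zero hW hc hd heq hk hck hl hdl hlk
  simp only [dotProduct, mulVec, Set.indicator_apply, Set.mem_Ioi, Set.mem_Iic, Pi.one_apply,
    mul_ite, mul_one, mul_zero, ite_mul, one_mul, zero_mul] at hblock
  have hrow_nonneg : ∀ x, 0 ≤ ∑ y, if y ≤ l then W x y else 0 :=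
    fun x => Finset.sum_nonneg fun y _ => ite_nonneg (hW0 x y) le_rfl
  rw [Finset.sum_eq_zero_iff_of_nonneg fun x _ => ite_nonneg (hrow_nonneg x) le_rfl] at hblock
  have hrow := hblock i (mem_univ i)
  rw [if_pos hi, Finset.sum_eq_zero_iff_of_nonneg fun y _ => ite_nonneg (hW0 i y) le_rfl] at hrow
  simpa [hj] using hrow j (mem_univ j)

theorem exists_eq_and_eq_of_dotProduct_mulVec_eq_of_lt [LocallyFiniteOrder ι]
    (hW : W ∈ doublyStochastic ℝ ι) (hc : Monotone c) (hd : Antitone d)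
    (heq : c ⬝ᵥ (W *ᵥ d) = c ⬝ᵥ d) {i j : ι} (hji : j < i) (hWij : W i j ≠ 0) :
    ∃ m, c m = c i ∧ d m = d j := by
  by_contra! hno
  set k' := (univ.filter (c · = c i)).min' ⟨i, by simp⟩
  have hk'c : c k' = c i := (mem_filter.1 (min'_mem (univ.filter (c · = c i)) _)).2
  have hk'min : ∀ x, c x = c i → k' ≤ x := fun x hx => min'_le _ _ (by simp [hx])
  set l := (univ.filter (d · = d j)).max' ⟨j, by simp⟩
  have hld : d l = d j := (mem_filter.1 (max'_mem (univ.filter (d · = d j)) _)).2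
  have hlmax : ∀ x, d x = d j → x ≤ l := fun x hx => le_max' _ _ (by simp [hx])
  have hjk' : j < k' := by
    by_contra! h
    exact hno j (le_antisymm (hc hji.le) (hk'c ▸ hc h)) rfl
  have hlk' : l < k' := by
    by_contra! h
    exact hno k' hk'c (le_antisymm (hd hjk'.le) (hld ▸ hd h))
  obtain ⟨k, hlk, hk⟩ := exists_le_covBy_of_lt hlk'
  obtain ⟨l', hl, -⟩ := exists_covBy_le_of_lt hlk'
  have hck : c k < c k' :=
    (hc hk.le).lt_of_ne fun h => hk.lt.not_ge (hk'min k (h.trans hk'c))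
  have hdl : d l' < d l :=
    (hd hl.le).lt_of_ne fun h => hl.lt.not_ge (hlmax l' (h.trans hld))
  exact hWij (apply_eq_zero_of_dotProduct_mulVec_eq hW hc hd heq hk hck hl hdl hlk
    (hk.lt.trans_le (hk'min i rfl)) (hlmax j rfl))

theorem exists_eq_and_eq_of_dotProduct_mulVec_eq [LocallyFiniteOrder ι]
    (hW : W ∈ doublyStochastic ℝ ι) (hc : Monotone c) (hd : Antitone d)
    (heq : c ⬝ᵥ (W *ᵥ d) = c ⬝ᵥ d) {i j : ι} (hWij : W i j ≠ 0) :
    ∃ m, c m = c i ∧ d m = d j := by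
  rcases lt_trichotomy j i with hji | rfl | hij
  · exact exists_eq_and_eq_of_dotProduct_mulVec_eq_of_lt hW hc hd heq hji hWij
  · exact ⟨j, rfl, rfl⟩
  · have heq' : -d ⬝ᵥ (Wᵀ *ᵥ -c) = -d ⬝ᵥ -c := by
      simpa [mulVec_neg, mulVec_transpose, dotProduct_comm d, ← dotProduct_mulVec] using heq
    obtain ⟨m, hm, hm'⟩ := exists_eq_and_eq_of_dotProduct_mulVec_eq_of_lt
      (transpose_mem_doublyStochastic_iff.2 hW) hd.neg hc.neg heq' hij hWij
    exact ⟨m, neg_inj.1 hm', neg_inj.1 hm⟩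

end Matrix

theorem Finset.card_filter_eq_card_filter_add {ι : Type*} {S : Finset ι} {p q : ι → Prop}
    [DecidablePred p] [DecidablePred q] (h : ∀ m ∈ S, p m → q m) :
    #{m ∈ S | q m} = #{m ∈ S | p m} + #{m ∈ S | ¬p m ∧ q m} := by
  rw [← card_filter_add_card_filter_not (s := {m ∈ S | q m}) p, filter_filter, filter_filter]
  congr 2
  · exact filter_congr fun m hm => ⟨And.right, fun hp => ⟨h m hm hp, hp⟩⟩
  · exact filter_congr fun m _ => and_comm

theorem Finset.forall_eq_of_card_filter_le {ι α β : Type*} [LinearOrder ι] [PartialOrder α]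
    [PartialOrder β] [DecidableEq α] [DecidableEq β] {S : Finset ι} (hS : S.Nonempty)
    {lam : ι → α} {mu : ι → β} (hlam : Antitone lam) (hmu : Antitone mu)
    (hcard : #{m ∈ S | lam m = lam (S.min' hS)} ≤ #{m ∈ S | mu m = mu (S.min' hS)}) :
    ∀ x ∈ S, lam x = lam (S.min' hS) → mu x = mu (S.min' hS) := by
  intro x hx hxl
  by_contra hxm
  have hsub : {m ∈ S | mu m = mu (S.min' hS)} ⊆ {m ∈ S | lam m = lam (S.min' hS)}.erase x := by
    intro y hy
    obtain ⟨hyS, hym⟩ := mem_filter.1 hy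
    have hyx : y < x := by
      by_contra! hxy
      exact hxm (le_antisymm (hmu (S.min'_le x hx)) (hym ▸ hmu hxy))
    refine mem_erase.2 ⟨hyx.ne, mem_filter.2 ⟨hyS, ?_⟩⟩
    exact le_antisymm (hlam (S.min'_le y hyS)) (hxl ▸ hlam hyx.le)
  have hx' : x ∈ {m ∈ S | lam m = lam (S.min' hS)} := mem_filter.2 ⟨hx, hxl⟩
  have := card_le_card hsub
  rw [card_erase_of_mem hx'] at this
  have := card_pos.2 ⟨x, hx'⟩
  omega

theorem Function.update_inf_le {κ α : Type*} [DecidableEq κ] [SemilatticeInf α] (f : κ → α)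
    (k : κ) (a : α) : Function.update f k (f k ⊓ a) ≤ f := fun b => by
  rcases eq_or_ne b k with rfl | hb
  · simp
  · simp [hb]

namespace Submodule

variable {V : Type*} [NormedAddCommGroup V] [InnerProductSpace ℝ V]

theorem le_of_le_sup_of_isOrtho {X Y Z : Submodule ℝ V} (h : X ≤ Y ⊔ Z) (hX : X ⟂ Z)
    (hY : Y ⟂ Z) : X ≤ Y := by
  have := le_inf h hX.le
  rwa [sup_inf_assoc_of_le Z hY.le, inf_orthogonal_eq_bot, sup_bot_eq] at this

theorem iSup_update_inf_orthogonal {κ : Type*} [DecidableEq κ] {F : κ → Submodule ℝ V}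
    {β : κ} {K : Submodule ℝ V} (hK : ∀ b ≠ β, F b ≤ Kᗮ) :
    ⨆ b, Function.update F β (F β ⊓ Kᗮ) b = (⨆ b, F b) ⊓ Kᗮ := by
  have hrest : ⨆ (b) (_ : b ≠ β), Function.update F β (F β ⊓ Kᗮ) b = ⨆ (b) (_ : b ≠ β), F b :=
    biSup_congr fun b hb => Function.update_of_ne hb _ _
  rw [iSup_split_single _ β, iSup_split_single F β, Function.update_self, hrest, sup_comm,
    sup_comm (F β), sup_inf_assoc_of_le _ (iSup₂_le hK)]

theorem exists_orthonormal_forall_mem [FiniteDimensional ℝ V] {ι κ : Type*} [Fintype ι]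
    [DecidableEq κ] (G : κ → Submodule ℝ V) (hG : Pairwise fun k k' => G k ⟂ G k')
    (p : ι → κ) (hp : ∀ k, #{m | p m = k} ≤ finrank ℝ (G k)) :
    ∃ q : ι → V, Orthonormal ℝ q ∧ ∀ m, q m ∈ G (p m) := by
  let e : ∀ k, {m // p m = k} ↪ Fin (finrank ℝ (G k)) := fun k =>
    (Function.Embedding.nonempty_of_card_le (by simpa [Fintype.card_subtype] using hp k)).some
  let σ : ι → Σ k, Fin (finrank ℝ (G k)) :=
    Sigma.map id (fun k => e k) ∘ (Equiv.sigmaFiberEquiv p).symm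
  have hσ : Function.Injective σ :=
    (Function.injective_id.sigma_map fun k => (e k).injective).comp (Equiv.injective _)
  refine ⟨fun m => (stdOrthonormalBasis ℝ (G (σ m).1) (σ m).2 : V),
    ((OrthogonalFamily.of_pairwise hG).orthonormal_sigma_orthonormal
      fun k => (stdOrthonormalBasis ℝ (G k)).orthonormal).comp σ hσ, fun m => ?_⟩
  exact (stdOrthonormalBasis ℝ (G (σ m).1) (σ m).2).2

end Submodule

/-- `E α` and `F β` model the eigenspaces of two symmetric operators whose eigenvalues, with
multiplicity, are `lam` and `mu` on `S`; the last field is the orthogonality pattern produced by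
the equality case. -/
structure CompatibleDecompositions {V ι : Type*} [NormedAddCommGroup V] [InnerProductSpace ℝ V]
    (S : Finset ι) (lam mu : ι → ℝ) (E F : ℝ → Submodule ℝ V) : Prop where
  pairwise_isOrtho_left : Pairwise fun α α' => E α ⟂ E α'
  pairwise_isOrtho_right : Pairwise fun β β' => F β ⟂ F β'
  finrank_left : ∀ α, finrank ℝ (E α) = #{m ∈ S | lam m = α}
  finrank_right : ∀ β, finrank ℝ (F β) = #{m ∈ S | mu m = β}
  iSup_eq : ⨆ α, E α = ⨆ β, F β
  isOrtho : ∀ α β, (∀ m ∈ S, lam m = α → mu m ≠ β) → E α ⟂ F β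

namespace CompatibleDecompositions

variable {V ι : Type*} [NormedAddCommGroup V] [InnerProductSpace ℝ V]
  {S : Finset ι} {lam mu : ι → ℝ} {E F : ℝ → Submodule ℝ V}

theorem symm (h : CompatibleDecompositions S lam mu E F) :
    CompatibleDecompositions S mu lam F E where
  pairwise_isOrtho_left := h.pairwise_isOrtho_right
  pairwise_isOrtho_right := h.pairwise_isOrtho_left
  finrank_left := h.finrank_right
  finrank_right := h.finrank_left
  iSup_eq := h.iSup_eq.symm
  isOrtho β α hβα := (h.isOrtho α β fun m hm hα hβ => hβα m hm hβ hα).symm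

theorem le_of_forall_eq (h : CompatibleDecompositions S lam mu E F) {α β : ℝ}
    (hαβ : ∀ m ∈ S, lam m = α → mu m = β) : E α ≤ F β := by
  refine le_of_le_sup_of_isOrtho (Z := ⨆ (β') (_ : β' ≠ β), F β') ?_ ?_ ?_
  · rw [← iSup_split_single F β, ← h.iSup_eq]
    exact le_iSup E α
  · refine isOrtho_iSup_right.2 fun β' => isOrtho_iSup_right.2 fun hβ' => h.isOrtho α β' ?_
    exact fun m hm hmα => (hαβ m hm hmα).trans_ne hβ'.symm
  · exact isOrtho_iSup_right.2 fun β' => isOrtho_iSup_right.2 fun hβ' =>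
      h.pairwise_isOrtho_right hβ'.symm

theorem restrict [FiniteDimensional ℝ V] (h : CompatibleDecompositions S lam mu E F) {α β : ℝ}
    (hαβ : ∀ m ∈ S, lam m = α → mu m = β) :
    CompatibleDecompositions {m ∈ S | lam m ≠ α} lam mu (Function.update E α ⊥)
      (Function.update F β (F β ⊓ (E α)ᗮ)) := by
  have hle := h.le_of_forall_eq hαβ
  have hF_le := Function.update_inf_le F β (E α)ᗮ
  refine ⟨fun a a' haa' => ?_, fun b b' hbb' => ?_, fun a => ?_, fun b => ?_, ?_,
    fun a b hab => ?_⟩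
  · rcases eq_or_ne a α with rfl | ha
    · simp
    rcases eq_or_ne a' α with rfl | ha'
    · simp
    simpa [ha, ha'] using h.pairwise_isOrtho_left haa'
  · exact (h.pairwise_isOrtho_right hbb').mono (hF_le b) (hF_le b')
  · rcases eq_or_ne a α with rfl | ha
    · simp [filter_filter]
    rw [Function.update_of_ne ha, h.finrank_left, filter_filter]
    exact congrArg card (filter_congr fun m _ => ⟨fun hm => ⟨hm ▸ ha, hm⟩, And.right⟩)
  · rcases eq_or_ne b β with rfl | hb
    · have hrank := finrank_add_inf_finrank_orthogonal hle
      rw [h.finrank_left, h.finrank_right, card_filter_eq_card_filter_add hαβ] at hrank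
      rw [Function.update_self, inf_comm, filter_filter]
      simp only [ne_eq]
      omega
    rw [Function.update_of_ne hb, h.finrank_right, filter_filter]
    refine congrArg card (filter_congr fun m hm => ?_)
    exact ⟨fun hmb => ⟨fun hmα => hb (hmb ▸ hαβ m hm hmα), hmb⟩, And.right⟩
  · rw [← inf_orthogonal_eq_bot (E α),
      iSup_update_inf_orthogonal fun a ha => (h.pairwise_isOrtho_left ha).le,
      iSup_update_inf_orthogonal fun b hb => ((h.pairwise_isOrtho_right hb).mono_right hle).le,
      h.iSup_eq]
  · rcases eq_or_ne a α with rfl | ha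
    · simp
    rw [Function.update_of_ne ha]
    refine (h.isOrtho a b fun m hm hma => hab m (mem_filter.2 ⟨hm, ?_⟩) hma).mono_right (hF_le b)
    exact fun hmα => ha (hma.symm.trans hmα)

theorem card_filter_le_finrank_inf [FiniteDimensional ℝ V] [LinearOrder ι]
    (h : CompatibleDecompositions S lam mu E F) (hlam : Antitone lam) (hmu : Antitone mu)
    (α β : ℝ) : #{m ∈ S | lam m = α ∧ mu m = β} ≤ finrank ℝ ↥(E α ⊓ F β) := by
  induction S using Finset.strongInduction generalizing lam mu E F α β with
  | H S ih =>
  rcases S.eq_empty_or_nonempty with rfl | hS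
  · simp
  wlog hcard : #{m ∈ S | lam m = lam (S.min' hS)} ≤ #{m ∈ S | mu m = mu (S.min' hS)}
    generalizing lam mu E F α β
  · rw [inf_comm]
    simpa only [and_comm] using this h.symm hmu hlam β α (le_of_not_ge hcard)
  set α₀ := lam (S.min' hS)
  set β₀ := mu (S.min' hS)
  have hαβ := forall_eq_of_card_filter_le hS hlam hmu hcard
  have hle := h.le_of_forall_eq hαβ
  rcases eq_or_ne α α₀ with rfl | hα
  · rcases eq_or_ne β β₀ with rfl | hβ
    · rw [inf_eq_left.2 hle, h.finrank_left]
      exact card_le_card (monotone_filter_right _ fun m _ => And.left)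
    · convert Nat.zero_le _
      exact card_eq_zero.2 (filter_eq_empty_iff.2 fun m hm hm' => hβ (hm'.2 ▸ hαβ m hm hm'.1))
  have hS' : {m ∈ S | lam m ≠ α₀} ⊂ S :=
    filter_ssubset.2 ⟨S.min' hS, S.min'_mem hS, fun h => h rfl⟩
  calc #{m ∈ S | lam m = α ∧ mu m = β}
      = #{m ∈ {m ∈ S | lam m ≠ α₀} | lam m = α ∧ mu m = β} := by
        rw [filter_filter]
        exact congrArg card (filter_congr fun m _ => ⟨fun hm => ⟨hm.1 ▸ hα, hm⟩, And.right⟩)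
    _ ≤ _ := ih _ hS' (h.restrict hαβ) hlam hmu α β
    _ ≤ _ := by
      rw [Function.update_of_ne hα]
      exact Submodule.finrank_mono (inf_le_inf_left _ (Function.update_inf_le F β₀ _ β))

theorem exists_orthonormal_forall_mem_inf [FiniteDimensional ℝ V] [Fintype ι] [LinearOrder ι]
    (h : CompatibleDecompositions univ lam mu E F) (hlam : Antitone lam) (hmu : Antitone mu) :
    ∃ q : ι → V, Orthonormal ℝ q ∧ ∀ m, q m ∈ E (lam m) ⊓ F (mu m) := by
  refine exists_orthonormal_forall_mem (fun x : ℝ × ℝ => E x.1 ⊓ F x.2) ?_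
    (fun m => (lam m, mu m)) fun x => ?_
  · intro x y hxy
    rcases ne_or_eq x.1 y.1 with h₁ | h₁
    · exact (h.pairwise_isOrtho_left h₁).mono inf_le_left inf_le_left
    · have h₂ : x.2 ≠ y.2 := fun h₂ => hxy (Prod.ext h₁ h₂)
      exact (h.pairwise_isOrtho_right h₂).mono inf_le_right inf_le_right
  · simpa [Prod.ext_iff] using h.card_filter_le_finrank_inf hlam hmu x.1 x.2

end CompatibleDecompositions

theorem Orthonormal.finrank_span_image {V ι : Type*} [NormedAddCommGroup V]
    [InnerProductSpace ℝ V] [Fintype ι] {v : ι → V} (hv : Orthonormal ℝ v) (s : Set ι)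
    [DecidablePred (· ∈ s)] : finrank ℝ (span ℝ (v '' s)) = #{i | i ∈ s} := by
  rw [Set.image_eq_range, finrank_span_eq_card (b := fun x : s => v x)
    (hv.linearIndependent.comp _ Subtype.val_injective)]
  exact Fintype.card_subtype _

theorem Orthonormal.iSup_span_image_setOf_eq_top {V ι : Type*} [NormedAddCommGroup V]
    [InnerProductSpace ℝ V] [FiniteDimensional ℝ V] [Fintype ι] {v : ι → V}
    (hv : Orthonormal ℝ v) (hcard : Fintype.card ι = finrank ℝ V) (f : ι → ℝ) :
    ⨆ α, span ℝ (v '' {i | f i = α}) = ⊤ := by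
  rw [← span_iUnion, ← Set.image_iUnion, Set.iUnion_eq_univ_iff.2 fun i => ⟨f i, rfl⟩,
    Set.image_univ]
  exact hv.linearIndependent.span_eq_top_of_card_eq_finrank' hcard

namespace Matrix

variable {n : Type*}

def columnVec (P : Matrix n n ℝ) (i : n) : EuclideanSpace ℝ n := WithLp.toLp 2 (Pᵀ i)

def ofColumnVecs (q : n → EuclideanSpace ℝ n) : Matrix n n ℝ := of fun k m => q m k

theorem columnVec_ofColumnVecs (q : n → EuclideanSpace ℝ n) : (ofColumnVecs q).columnVec = q :=
  rfl

variable [Fintype n]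

theorem inner_columnVec (P R : Matrix n n ℝ) (i j : n) :
    inner ℝ (P.columnVec i) (R.columnVec j) = (Pᵀ * R) i j := by
  simp [columnVec, EuclideanSpace.inner_toLp_toLp, mul_apply, dotProduct, mul_comm]

variable [DecidableEq n]

theorem orthonormal_columnVec {P : Matrix n n ℝ} (hP : Pᵀ * P = 1) :
    Orthonormal ℝ P.columnVec :=
  orthonormal_iff_ite.2 fun i j => by rw [inner_columnVec, hP, one_apply]

theorem transpose_mul_ofColumnVecs_self {q : n → EuclideanSpace ℝ n} (hq : Orthonormal ℝ q) :
    (ofColumnVecs q)ᵀ * ofColumnVecs q = 1 := by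
  ext i j
  rw [← inner_columnVec, columnVec_ofColumnVecs, orthonormal_iff_ite.1 hq, one_apply]

theorem toLpLin_columnVec {P : Matrix n n ℝ} (hP : Pᵀ * P = 1) (ν : n → ℝ) (i : n) :
    toLpLin 2 2 (P * diagonal ν * Pᵀ) (P.columnVec i) = ν i • P.columnVec i := by
  have h : P * diagonal ν * Pᵀ * P = P * diagonal ν := by
    rw [Matrix.mul_assoc, hP, Matrix.mul_one]
  ext k
  have := congrFun (congrFun h k) i
  rw [mul_diagonal, mul_comm] at this
  simp only [columnVec, toLpLin_apply, WithLp.ofLp_toLp, PiLp.smul_apply, transpose_apply,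
    smul_eq_mul]
  exact this

theorem mul_ofColumnVecs {q : n → EuclideanSpace ℝ n} {M : Matrix n n ℝ} {ν : n → ℝ}
    (hM : ∀ m, toLpLin 2 2 M (q m) = ν m • q m) :
    M * ofColumnVecs q = ofColumnVecs q * diagonal ν := by
  ext k m
  have := congrArg (fun x : EuclideanSpace ℝ n => x k) (hM m)
  simp only [toLpLin_apply, PiLp.smul_apply, smul_eq_mul] at this
  rw [mul_diagonal, mul_comm]
  exact this

theorem span_columnVec_le_eigenspace {P : Matrix n n ℝ} (hP : Pᵀ * P = 1) (ν : n → ℝ)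
    (α : ℝ) :
    span ℝ (P.columnVec '' {i | ν i = α}) ≤ End.eigenspace (toLpLin 2 2 (P * diagonal ν * Pᵀ)) α :=
  span_le.2 <| by
    rintro _ ⟨i, rfl, rfl⟩
    exact End.mem_eigenspace_iff.2 (toLpLin_columnVec hP ν i)

theorem compatibleDecompositions_span_columnVec {P R : Matrix n n ℝ} (hP : Pᵀ * P = 1)
    (hR : Rᵀ * R = 1) {lam mu : n → ℝ}
    (hpat : ∀ i j, (Pᵀ * R) i j ≠ 0 → ∃ m, lam m = lam i ∧ mu m = mu j) :
    CompatibleDecompositions univ lam mu (fun α => span ℝ (P.columnVec '' {i | lam i = α}))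
      (fun β => span ℝ (R.columnVec '' {j | mu j = β})) where
  pairwise_isOrtho_left α α' hαα' := isOrtho_span.2 <| by
    rintro _ ⟨i, rfl, rfl⟩ _ ⟨j, hj, rfl⟩
    rw [inner_columnVec, hP, one_apply_ne]
    rintro rfl
    exact hαα' hj
  pairwise_isOrtho_right β β' hββ' := isOrtho_span.2 <| by
    rintro _ ⟨i, rfl, rfl⟩ _ ⟨j, hj, rfl⟩
    rw [inner_columnVec, hR, one_apply_ne]
    rintro rfl
    exact hββ' hj
  finrank_left α := (orthonormal_columnVec hP).finrank_span_image _
  finrank_right β := (orthonormal_columnVec hR).finrank_span_image _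
  iSup_eq := by
    rw [(orthonormal_columnVec hP).iSup_span_image_setOf_eq_top finrank_euclideanSpace.symm,
      (orthonormal_columnVec hR).iSup_span_image_setOf_eq_top finrank_euclideanSpace.symm]
  isOrtho α β hαβ := isOrtho_span.2 <| by
    rintro _ ⟨i, rfl, rfl⟩ _ ⟨j, rfl, rfl⟩
    rw [inner_columnVec]
    by_contra hne
    obtain ⟨m, hmi, hmj⟩ := hpat i j hne
    exact hαβ m (mem_univ m) hmi hmj

theorem exists_orthogonal_diagonalizing_of_forall_ne_zero [LinearOrder n] {P R : Matrix n n ℝ}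
    (hP : Pᵀ * P = 1) (hR : Rᵀ * R = 1) {lam mu : n → ℝ} (hlam : Antitone lam)
    (hmu : Antitone mu) (hpat : ∀ i j, (Pᵀ * R) i j ≠ 0 → ∃ m, lam m = lam i ∧ mu m = mu j) :
    ∃ Q : Matrix n n ℝ, Qᵀ * Q = 1 ∧ P * diagonal lam * Pᵀ * Q = Q * diagonal lam ∧
      R * diagonal mu * Rᵀ * Q = Q * diagonal mu := by
  obtain ⟨q, hq, hmem⟩ :=
    (compatibleDecompositions_span_columnVec hP hR hpat).exists_orthonormal_forall_mem_inf hlam hmu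
  refine ⟨ofColumnVecs q, transpose_mul_ofColumnVecs_self hq, mul_ofColumnVecs fun m => ?_,
    mul_ofColumnVecs fun m => ?_⟩
  · exact End.mem_eigenspace_iff.1 (span_columnVec_le_eigenspace hP lam _ (hmem m).1)
  · exact End.mem_eigenspace_iff.1 (span_columnVec_le_eigenspace hR mu _ (hmem m).2)

theorem transpose_mul_mul_eq_diagonal {Q M : Matrix n n ℝ} {ν : n → ℝ} (hQ : Qᵀ * Q = 1)
    (hM : M * Q = Q * diagonal ν) : Qᵀ * M * Q = diagonal ν := by
  rw [Matrix.mul_assoc, hM, ← Matrix.mul_assoc, hQ, Matrix.one_mul]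

theorem commute_of_mul_eq_mul_diagonal {Q A B : Matrix n n ℝ} {a b : n → ℝ} (hQ : Qᵀ * Q = 1)
    (hA : A * Q = Q * diagonal a) (hB : B * Q = Q * diagonal b) : A * B = B * A := by
  have hconj : ∀ {M : Matrix n n ℝ} {ν : n → ℝ}, M * Q = Q * diagonal ν →
      M = Q * diagonal ν * Qᵀ := fun h => by
    rw [← h, Matrix.mul_assoc, mul_eq_one_comm.1 hQ, Matrix.mul_one]
  have hprod : ∀ ν ν' : n → ℝ, Q * diagonal ν * Qᵀ * (Q * diagonal ν' * Qᵀ)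
      = Q * (diagonal ν * diagonal ν') * Qᵀ := fun ν ν' => by
    simp only [Matrix.mul_assoc]
    rw [← Matrix.mul_assoc Qᵀ, hQ, Matrix.one_mul]
  rw [hconj hA, hconj hB, hprod, hprod, (commute_diagonal a b).eq]

theorem mul_diagonal_mul_transpose_sub_smul_one {P : Matrix n n ℝ} (hP : P * Pᵀ = 1)
    (ν : n → ℝ) (a : ℝ) :
    P * diagonal ν * Pᵀ - a • 1 = P * diagonal (fun i => ν i - a) * Pᵀ := by
  have hdiag : diagonal (fun i => ν i - a) = diagonal ν - a • 1 := by
    rw [smul_one_eq_diagonal, diagonal_sub]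
  rw [hdiag, Matrix.mul_sub, Matrix.sub_mul, Matrix.mul_smul, Matrix.smul_mul, Matrix.mul_one,
    hP]

theorem pos_of_posDef_mul_diagonal_mul_transpose {P : Matrix n n ℝ} (hP : Pᵀ * P = 1)
    {ν : n → ℝ} (h : (P * diagonal ν * Pᵀ).PosDef) (i : n) : 0 < ν i := by
  have hinj : Function.Injective P.mulVec := fun x y hxy => by
    simpa [mulVec_mulVec, hP] using congrArg (Pᵀ *ᵥ ·) hxy
  have := h.conjTranspose_mul_mul_same hinj
  rw [conjTranspose_eq_transpose_of_trivial, ← Matrix.mul_assoc, ← Matrix.mul_assoc, hP,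
    Matrix.one_mul, Matrix.mul_assoc, hP, Matrix.mul_one, posDef_diagonal_iff] at this
  exact this i

theorem inv_mul_diagonal_mul_transpose {P : Matrix n n ℝ} (hP : Pᵀ * P = 1) {ν : n → ℝ}
    (hν : ∀ i, ν i ≠ 0) : (P * diagonal ν * Pᵀ)⁻¹ = P * diagonal ν⁻¹ * Pᵀ := by
  refine inv_eq_left_inv ?_
  have hone : diagonal (fun i => ν⁻¹ i * ν i) = 1 :=
    diagonal_eq_one.2 (funext fun i => inv_mul_cancel₀ (hν i))
  calc P * diagonal ν⁻¹ * Pᵀ * (P * diagonal ν * Pᵀ)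
      = P * (diagonal ν⁻¹ * (Pᵀ * P) * diagonal ν) * Pᵀ := by simp only [Matrix.mul_assoc]
    _ = 1 := by
      rw [hP, Matrix.mul_one, diagonal_mul_diagonal, hone, Matrix.mul_one, mul_eq_one_comm.1 hP]

theorem trace_mul_diagonal_mul_transpose {P R : Matrix n n ℝ} (hP : Pᵀ * P = 1)
    (e f : n → ℝ) :
    (P * diagonal e * Pᵀ * (R * diagonal f * Rᵀ) * (P * diagonal e * Pᵀ)).trace
      = (e * e) ⬝ᵥ (((Pᵀ * R) ⊙ (Pᵀ * R)) *ᵥ f) := by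
  set S := Pᵀ * R
  have hconj : P * diagonal e * Pᵀ * (R * diagonal f * Rᵀ) * (P * diagonal e * Pᵀ)
      = P * (diagonal e * S * diagonal f * Sᵀ * diagonal e) * Pᵀ := by
    simp only [S, transpose_mul, transpose_transpose, Matrix.mul_assoc]
  have hentry : ∀ i, (diagonal e * S * diagonal f * Sᵀ * diagonal e) i i
      = e i * e i * ∑ j, S i j * S i j * f j := fun i => by
    rw [mul_diagonal, mul_apply, Finset.mul_sum, Finset.sum_mul]
    refine Finset.sum_congr rfl fun j _ => ?_
    rw [mul_diagonal, diagonal_mul, transpose_apply]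
    ring
  rw [hconj, trace_mul_cycle, ← Matrix.mul_assoc, hP, Matrix.one_mul]
  simp only [Matrix.trace, diag_apply, hentry, dotProduct, mulVec, hadamard_apply, Pi.mul_apply]

theorem trace_inv_mul_mul_inv_eq_dotProduct {P R : Matrix n n ℝ} (hP : Pᵀ * P = 1)
    (hR : Rᵀ * R = 1) {ν μ : n → ℝ} {a b : ℝ} (hν : ∀ i, ν i ≠ a) :
    ((P * diagonal ν * Pᵀ - a • 1)⁻¹ * (R * diagonal μ * Rᵀ - b • 1)
        * (P * diagonal ν * Pᵀ - a • 1)⁻¹).trace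
      = (fun i => ((ν i - a) ^ 2)⁻¹) ⬝ᵥ (((Pᵀ * R) ⊙ (Pᵀ * R)) *ᵥ fun j => μ j - b) := by
  rw [mul_diagonal_mul_transpose_sub_smul_one (mul_eq_one_comm.1 hP),
    mul_diagonal_mul_transpose_sub_smul_one (mul_eq_one_comm.1 hR),
    inv_mul_diagonal_mul_transpose hP fun i => sub_ne_zero.2 (hν i),
    trace_mul_diagonal_mul_transpose hP]
  congr 1
  ext i
  simp [sq]

theorem hadamard_self_mem_doublyStochastic {S : Matrix n n ℝ} (hS : Sᵀ * S = 1) :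
    S ⊙ S ∈ doublyStochastic ℝ n := by
  have hS' : S * Sᵀ = 1 := mul_eq_one_comm.1 hS
  refine mem_doublyStochastic_iff_sum.2 ⟨fun i j => mul_self_nonneg _, fun i => ?_, fun j => ?_⟩
  · simpa [mul_apply] using congrFun (congrFun hS' i) i
  · simpa [mul_apply] using congrFun (congrFun hS j) j

end Matrix

theorem stmt4_general {N : ℕ} (A B P R : Matrix (Fin N) (Fin N) ℝ) (a₁ b₁ : ℝ)
    (hApos : (A - a₁ • (1 : Matrix (Fin N) (Fin N) ℝ)).PosDef)
    (lam mu : Fin N → ℝ) (hlam : Antitone lam) (hmu : Antitone mu)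
    (hP' : Pᵀ * P = 1)
    (hR' : Rᵀ * R = 1)
    (hAdiag : A = P * Matrix.diagonal lam * Pᵀ)
    (hBdiag : B = R * Matrix.diagonal mu * Rᵀ) :
    (∑ i : Fin N, (mu i - b₁) / (lam i - a₁) ^ 2)
      ≤ ((A - a₁ • 1)⁻¹ * (B - b₁ • 1) * (A - a₁ • 1)⁻¹).trace ∧
    (((A - a₁ • 1)⁻¹ * (B - b₁ • 1) * (A - a₁ • 1)⁻¹).trace
        = ∑ i : Fin N, (mu i - b₁) / (lam i - a₁) ^ 2 →
      A * B = B * A ∧ ∃ Q : Matrix (Fin N) (Fin N) ℝ,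
        Q * Qᵀ = 1 ∧ Qᵀ * Q = 1 ∧ Qᵀ * A * Q = Matrix.diagonal lam ∧
        Qᵀ * B * Q = Matrix.diagonal mu) := by
  subst hAdiag hBdiag
  rw [mul_diagonal_mul_transpose_sub_smul_one (mul_eq_one_comm.1 hP')] at hApos
  have hgap : ∀ i, 0 < lam i - a₁ := pos_of_posDef_mul_diagonal_mul_transpose hP' hApos
  rw [trace_inv_mul_mul_inv_eq_dotProduct hP' hR' fun i => (sub_pos.1 (hgap i)).ne']
  set c : Fin N → ℝ := fun i => ((lam i - a₁) ^ 2)⁻¹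
  set d : Fin N → ℝ := fun j => mu j - b₁
  have hsum : ∑ i, (mu i - b₁) / (lam i - a₁) ^ 2 = c ⬝ᵥ d := by
    simp [c, d, dotProduct, div_eq_inv_mul]
  have hW : (Pᵀ * R) ⊙ (Pᵀ * R) ∈ doublyStochastic ℝ (Fin N) :=
    hadamard_self_mem_doublyStochastic (by
      rw [transpose_mul, transpose_transpose, Matrix.mul_assoc, ← Matrix.mul_assoc P,
        mul_eq_one_comm.1 hP', Matrix.one_mul, hR'])
  have hc : Monotone c := fun i j hij =>
    inv_anti₀ (pow_pos (hgap j) 2) (pow_le_pow_left₀ (hgap j).le (by linarith [hlam hij]) 2)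
  have hd : Antitone d := fun i j hij => sub_le_sub_right (hmu hij) _
  rw [hsum]
  refine ⟨dotProduct_le_dotProduct_mulVec_of_mem_doublyStochastic hW hc hd, fun heq => ?_⟩
  have hpat : ∀ i j, (Pᵀ * R) i j ≠ 0 → ∃ m, lam m = lam i ∧ mu m = mu j := fun i j hij => by
    obtain ⟨m, hm, hm'⟩ :=
      exists_eq_and_eq_of_dotProduct_mulVec_eq hW hc hd heq (mul_self_ne_zero.2 hij)
    refine ⟨m, ?_, by simpa [d] using hm'⟩
    simpa [c, pow_left_inj₀ (hgap m).le (hgap i).le two_ne_zero] using hm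
  obtain ⟨Q, hQ, hAQ, hBQ⟩ :=
    exists_orthogonal_diagonalizing_of_forall_ne_zero hP' hR' hlam hmu hpat
  exact ⟨commute_of_mul_eq_mul_diagonal hQ hAQ hBQ, Q, mul_eq_one_comm.1 hQ, hQ,
    transpose_mul_mul_eq_diagonal hQ hAQ, transpose_mul_mul_eq_diagonal hQ hBQ⟩

/-- Optimality-Commutativity Lemma: trace lower bound for
`(A-a₁I)⁻¹(B-b₁I)(A-a₁I)⁻¹` in terms of oppositely-ordered eigenvalues, with
equality forcing commutation and simultaneous diagonalization. -/
theorem stmt4 {N : ℕ} (A B P R : Matrix (Fin N) (Fin N) ℝ) (a₁ b₁ : ℝ)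
    (hA : A.IsSymm) (hB : B.IsSymm)
    (hApos : (A - a₁ • (1 : Matrix (Fin N) (Fin N) ℝ)).PosDef)
    (hBpos : (B - b₁ • (1 : Matrix (Fin N) (Fin N) ℝ)).PosDef)
    (lam mu : Fin N → ℝ) (hlam : Antitone lam) (hmu : Antitone mu)
    (hP : P * Pᵀ = 1) (hP' : Pᵀ * P = 1)
    (hR : R * Rᵀ = 1) (hR' : Rᵀ * R = 1)
    (hAdiag : A = P * Matrix.diagonal lam * Pᵀ)
    (hBdiag : B = R * Matrix.diagonal mu * Rᵀ) :
    (∑ i : Fin N, (mu i - b₁) / (lam i - a₁) ^ 2)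
      ≤ ((A - a₁ • 1)⁻¹ * (B - b₁ • 1) * (A - a₁ • 1)⁻¹).trace ∧
    (((A - a₁ • 1)⁻¹ * (B - b₁ • 1) * (A - a₁ • 1)⁻¹).trace
        = ∑ i : Fin N, (mu i - b₁) / (lam i - a₁) ^ 2 →
      A * B = B * A ∧ ∃ Q : Matrix (Fin N) (Fin N) ℝ,
        Q * Qᵀ = 1 ∧ Qᵀ * Q = 1 ∧ Qᵀ * A * Q = Matrix.diagonal lam ∧
        Qᵀ * B * Q = Matrix.diagonal mu) :=
  stmt4_general A B P R a₁ b₁ hApos lam mu hlam hmu hP' hR' hAdiag hBdiag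
end

section
/- Let 0 < a₁ < a₂, 0 < b₁ ≤ b₂, θ_A ∈ [0,1), θ_B ∈ [0,1]. Let a̲ = (θ_A/a₁ + (1−θ_A)/a₂)^{-1} and ā = a₁θ_A + a₂(1−θ_A) be the harmonic and arithmetic means, and set L₁^# = a̲²[ b₂/a₂² + (b₁−b₂)θ_B/a₂² + b₁(1/a₁² − 1/a₂²)θ_A ]. Then the identity (L₁^# − b₁)·(ā − a₁)²/(a̲ − a₁)² = (b₂ − b₁)(1 − θ_B) + (b₁/a₁²)(a₂ − a₁)² θ_A (1 − θ_A) holds. -/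
/-!
Write `D = θ_A a₂ + (1 - θ_A) a₁`. Then `a̲ = a₁ a₂ / D`, `a̲ - a₁ = a₁ (1 - θ_A)(a₂ - a₁) / D` and
`ā - a₁ = (1 - θ_A)(a₂ - a₁)`, so the factor `(ā - a₁)² / (a̲ - a₁)²` is just `D² / a₁²`.
Multiplying `L₁^# - b₁` by it clears the denominator of `a̲²`, and what remains is a polynomial
identity.
-/

section WeightedMeans

variable {K : Type*} [Field K] {a₁ a₂ θ : K}

theorem inv_weighted_inv_add_eq (ha₁ : a₁ ≠ 0) (ha₂ : a₂ ≠ 0) :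
    (θ / a₁ + (1 - θ) / a₂)⁻¹ = a₁ * a₂ / (θ * a₂ + (1 - θ) * a₁) := by
  rw [div_add_div _ _ ha₁ ha₂, inv_div]
  ring

theorem inv_weighted_inv_add_sub_left (ha₁ : a₁ ≠ 0) (ha₂ : a₂ ≠ 0)
    (hD : θ * a₂ + (1 - θ) * a₁ ≠ 0) :
    (θ / a₁ + (1 - θ) / a₂)⁻¹ - a₁ = a₁ * (1 - θ) * (a₂ - a₁) / (θ * a₂ + (1 - θ) * a₁) := by
  rw [inv_weighted_inv_add_eq ha₁ ha₂, eq_div_iff hD, sub_mul, div_mul_cancel₀ _ hD]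
  ring

theorem weighted_arith_sub_div_harm_sub (ha₁ : a₁ ≠ 0) (ha₂ : a₂ ≠ 0) (ha : a₁ ≠ a₂)
    (hθ : θ ≠ 1) (hD : θ * a₂ + (1 - θ) * a₁ ≠ 0) :
    (a₁ * θ + a₂ * (1 - θ) - a₁) / ((θ / a₁ + (1 - θ) / a₂)⁻¹ - a₁)
      = (θ * a₂ + (1 - θ) * a₁) / a₁ := by
  have h₁ : 1 - θ ≠ 0 := sub_ne_zero.mpr hθ.symm
  have h₂ : a₂ - a₁ ≠ 0 := sub_ne_zero.mpr ha.symm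
  rw [inv_weighted_inv_add_sub_left ha₁ ha₂ hD]
  field_simp
  ring

end WeightedMeans

theorem weighted_mean_denom_pos {a₁ a₂ θ : ℝ} (ha₁ : 0 < a₁) (ha₂ : 0 < a₂)
    (hθ₀ : 0 ≤ θ) (hθ₁ : θ ≤ 1) : 0 < θ * a₂ + (1 - θ) * a₁ := by
  have h₁ := mul_le_mul_of_nonneg_left (min_le_left a₁ a₂) (sub_nonneg.2 hθ₁)
  have h₂ := mul_le_mul_of_nonneg_left (min_le_right a₁ a₂) hθ₀
  linarith [lt_min ha₁ ha₂]

theorem stmt9_general (a₁ a₂ b₁ b₂ θA θB au ab L1 : ℝ)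
    (ha₁ : 0 < a₁) (ha : a₁ < a₂)
    (hθA0 : 0 ≤ θA) (hθA1 : θA < 1)
    (hau : au = (θA / a₁ + (1 - θA) / a₂)⁻¹)
    (hab : ab = a₁ * θA + a₂ * (1 - θA))
    (hL1 : L1 = au ^ 2 * (b₂ / a₂ ^ 2 + (b₁ - b₂) * θB / a₂ ^ 2
      + b₁ * (1 / a₁ ^ 2 - 1 / a₂ ^ 2) * θA)) :
    (L1 - b₁) * (ab - a₁) ^ 2 / (au - a₁) ^ 2
      = (b₂ - b₁) * (1 - θB) + (b₁ / a₁ ^ 2) * (a₂ - a₁) ^ 2 * θA * (1 - θA) := by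
  have ha₂ : 0 < a₂ := ha₁.trans ha
  have hD := weighted_mean_denom_pos ha₁ ha₂ hθA0 hθA1.le
  have hratio := weighted_arith_sub_div_harm_sub ha₁.ne' ha₂.ne' ha.ne hθA1.ne hD.ne'
  rw [mul_div_assoc, ← div_pow, hab, hau, hratio, hL1, hau,
    inv_weighted_inv_add_eq ha₁.ne' ha₂.ne']
  -- `field_simp` would expand `D` and then no longer recognise it as nonzero
  generalize hDdef : θA * a₂ + (1 - θA) * a₁ = D at hD ⊢
  field_simp
  rw [← hDdef]
  ring

/-- The simple laminate saturates the lower trace bound L1: algebraic identity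
`(L₁^# − b₁)(ā−a₁)²/(a̲−a₁)² = (b₂−b₁)(1−θ_B) + (b₁/a₁²)(a₂−a₁)²θ_A(1−θ_A)`. -/
theorem stmt9 (a₁ a₂ b₁ b₂ θA θB au ab L1 : ℝ)
    (ha₁ : 0 < a₁) (ha : a₁ < a₂) (hb₁ : 0 < b₁) (hb : b₁ ≤ b₂)
    (hθA0 : 0 ≤ θA) (hθA1 : θA < 1) (hθB : θB ∈ Set.Icc (0:ℝ) 1)
    (hau : au = (θA / a₁ + (1 - θA) / a₂)⁻¹)
    (hab : ab = a₁ * θA + a₂ * (1 - θA))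
    (hL1 : L1 = au ^ 2 * (b₂ / a₂ ^ 2 + (b₁ - b₂) * θB / a₂ ^ 2
      + b₁ * (1 / a₁ ^ 2 - 1 / a₂ ^ 2) * θA)) :
    (L1 - b₁) * (ab - a₁) ^ 2 / (au - a₁) ^ 2
      = (b₂ - b₁) * (1 - θB) + (b₁ / a₁ ^ 2) * (a₂ - a₁) ^ 2 * θA * (1 - θA) :=
  stmt9_general a₁ a₂ b₁ b₂ θA θB au ab L1 ha₁ ha hθA0 hθA1 hau hab hL1
end

section
/- Let N ≥ 1, 0 < a₁ < a₂, θ ∈ (0,1). Let e₁,…,e_p ∈ ℝ^N be unit vectors and m₁,…,m_p ≥ 0 with Σ_{i=1}^p m_i = 1. Define the symmetric matrix A* by A* = a₁I + (1−θ)·[ (a₂−a₁)^{-1} I + (θ/a₁) Σ_{i=1}^p m_i e_i ⊗ e_i ]^{-1}. Then: (i) A* is well defined and A* − a₁I is symmetric positive definite; (ii) A* ≤ (a₁θ + a₂(1−θ)) I; and (iii) tr (A* − a₁I)^{-1} = N/((1−θ)(a₂−a₁)) + θ/((1−θ)a₁), i.e. A* achieves equality in the optimal lower trace bound for two-phase effective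 tensors. -/
/-!
With `S = ∑ mᵢ eᵢ ⊗ eᵢ`, which is positive semidefinite of trace `1`, and
`K = (a₂ - a₁)⁻¹ I + (θ / a₁) S`, one has `A* - a₁ I = (1 - θ) K⁻¹`, so everything is a statement
about `K`. It is positive definite since `S ⪰ 0`, and `tr (A* - a₁ I)⁻¹ = (1 - θ)⁻¹ tr K` is read
off from `tr S = 1`. The upper bound on `A*` is `K⁻¹ ⪯ (a₂ - a₁) I`: since `S` commutes with `K`,
`c I - K⁻¹ = K⁻¹ (c s K S) K⁻¹` for `c = a₂ - a₁`, `s = θ / a₁`, and `K S = c⁻¹ S + s S²` is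
positive semidefinite.
-/

open Matrix

section Laminate

variable {n ι : Type*} [Fintype ι]

lemma posSemidef_sum_smul_vecMulVec_self [Fintype n] {m : ι → ℝ} (hm : ∀ i, 0 ≤ m i)
    (e : ι → n → ℝ) :
    (∑ i, m i • vecMulVec (e i) (e i)).PosSemidef :=
  posSemidef_sum _ fun i _ => by
    simpa using (posSemidef_vecMulVec_self_star (e i)).smul (hm i)

lemma trace_sum_smul_vecMulVec_self [Fintype n] (m : ι → ℝ) {e : ι → n → ℝ}
    (he : ∀ i, e i ⬝ᵥ e i = 1) :
    (∑ i, m i • vecMulVec (e i) (e i)).trace = ∑ i, m i := by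
  simp [trace_sum, trace_vecMulVec, he]

variable [DecidableEq n]

lemma posDef_inv_smul_one_add_smul {c s : ℝ} (hc : 0 < c) (hs : 0 ≤ s) {S : Matrix n n ℝ}
    (hS : S.PosSemidef) : (c⁻¹ • (1 : Matrix n n ℝ) + s • S).PosDef :=
  (PosDef.one.smul (inv_pos.mpr hc)).add_posSemidef (hS.smul hs)

lemma posSemidef_smul_one_sub_inv_inv_smul_one_add_smul [Fintype n] {c s : ℝ} (hc : 0 < c)
    (hs : 0 ≤ s) {S : Matrix n n ℝ} (hS : S.PosSemidef) :
    (c • (1 : Matrix n n ℝ) - (c⁻¹ • (1 : Matrix n n ℝ) + s • S)⁻¹).PosSemidef := by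
  set K := c⁻¹ • (1 : Matrix n n ℝ) + s • S with hK
  have hKpd : K.PosDef := posDef_inv_smul_one_add_smul hc hs hS
  have hKdet : IsUnit K.det := (isUnit_iff_isUnit_det K).mp hKpd.isUnit
  have hKS : (K * S).PosSemidef := by
    rw [hK, add_mul, smul_mul_assoc, one_mul, smul_mul_assoc, ← sq]
    exact (hS.smul (inv_pos.mpr hc).le).add ((hS.pow 2).smul hs)
  have hcK : c • K - 1 = (c * s) • S := by
    rw [hK, smul_add, smul_smul, smul_smul, mul_inv_cancel₀ hc.ne', one_smul, add_sub_cancel_left]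
  have hconj : c • 1 - K⁻¹ = K⁻¹ * ((c * s) • (K * S)) * K⁻¹ᴴ := by
    rw [hKpd.inv.isHermitian.eq, mul_smul_comm, nonsing_inv_mul_cancel_left _ _ hKdet, ← hcK,
      sub_mul, smul_mul_assoc, mul_nonsing_inv _ hKdet, one_mul]
  rw [hconj]
  exact (hKS.smul (mul_nonneg hc.le hs)).mul_mul_conjTranspose_same _

end Laminate

theorem stmt14_general {N p : ℕ} (a₁ a₂ θ : ℝ)
    (ha₁ : 0 < a₁) (ha : a₁ < a₂) (hθ : θ ∈ Set.Ioo (0:ℝ) 1)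
    (e : Fin p → Fin N → ℝ) (he : ∀ i, e i ⬝ᵥ e i = 1)
    (m : Fin p → ℝ) (hm : ∀ i, 0 ≤ m i) (hmsum : ∑ i, m i = 1)
    (K A : Matrix (Fin N) (Fin N) ℝ)
    (hK : K = (a₂ - a₁)⁻¹ • (1 : Matrix (Fin N) (Fin N) ℝ)
        + (θ / a₁) • ∑ i, m i • vecMulVec (e i) (e i))
    (hA : A = a₁ • (1 : Matrix (Fin N) (Fin N) ℝ) + (1 - θ) • K⁻¹) :
    IsUnit K ∧
    (A - a₁ • (1 : Matrix (Fin N) (Fin N) ℝ)).PosDef ∧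
    ((a₁ * θ + a₂ * (1 - θ)) • (1 : Matrix (Fin N) (Fin N) ℝ) - A).PosSemidef ∧
    ((A - a₁ • (1 : Matrix (Fin N) (Fin N) ℝ))⁻¹).trace
      = (N : ℝ) / ((1 - θ) * (a₂ - a₁)) + θ / ((1 - θ) * a₁) := by
  obtain ⟨hθ0, hθ1⟩ := hθ
  have hc : 0 < a₂ - a₁ := sub_pos.mpr ha
  have hs : 0 ≤ θ / a₁ := (div_pos hθ0 ha₁).le
  have h1θ : 0 < 1 - θ := sub_pos.mpr hθ1
  have hS := posSemidef_sum_smul_vecMulVec_self hm e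
  have hKpd : K.PosDef := hK ▸ posDef_inv_smul_one_add_smul hc hs hS
  have hAsub : A - a₁ • 1 = (1 - θ) • K⁻¹ := by rw [hA]; abel
  refine ⟨hKpd.isUnit, hAsub ▸ hKpd.inv.smul h1θ, ?_, ?_⟩
  · have hAbar : (a₁ * θ + a₂ * (1 - θ)) • 1 - A = (1 - θ) • ((a₂ - a₁) • 1 - K⁻¹) := by
      rw [hA]; module
    rw [hAbar, hK]
    exact (posSemidef_smul_one_sub_inv_inv_smul_one_add_smul hc hs hS).smul h1θ.le
  · have hinv : (A - a₁ • 1)⁻¹ = (1 - θ)⁻¹ • K := by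
      rw [hAsub]
      exact inv_eq_right_inv (by
        rw [smul_mul_smul_comm, nonsing_inv_mul _ ((isUnit_iff_isUnit_det K).mp hKpd.isUnit),
          mul_inv_cancel₀ h1θ.ne', one_smul])
    rw [hinv, trace_smul, hK, trace_add, trace_smul, trace_smul, trace_one,
      trace_sum_smul_vecMulVec_self m he, hmsum, Fintype.card_fin]
    simp only [smul_eq_mul]
    field_simp

/-- The rank-p sequential laminate `A* = a₁I + (1−θ)[(a₂−a₁)⁻¹I + (θ/a₁)Σ mᵢ eᵢ⊗eᵢ]⁻¹`
is well defined, satisfies `a₁I < A* ≤ āI` and achieves equality in the optimal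
lower trace bound. -/
theorem stmt14 {N p : ℕ} (hN : 1 ≤ N) (a₁ a₂ θ : ℝ)
    (ha₁ : 0 < a₁) (ha : a₁ < a₂) (hθ : θ ∈ Set.Ioo (0:ℝ) 1)
    (e : Fin p → Fin N → ℝ) (he : ∀ i, e i ⬝ᵥ e i = 1)
    (m : Fin p → ℝ) (hm : ∀ i, 0 ≤ m i) (hmsum : ∑ i, m i = 1)
    (K A : Matrix (Fin N) (Fin N) ℝ)
    (hK : K = (a₂ - a₁)⁻¹ • (1 : Matrix (Fin N) (Fin N) ℝ)
        + (θ / a₁) • ∑ i, m i • vecMulVec (e i) (e i))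
    (hA : A = a₁ • (1 : Matrix (Fin N) (Fin N) ℝ) + (1 - θ) • K⁻¹) :
    IsUnit K ∧
    (A - a₁ • (1 : Matrix (Fin N) (Fin N) ℝ)).PosDef ∧
    ((a₁ * θ + a₂ * (1 - θ)) • (1 : Matrix (Fin N) (Fin N) ℝ) - A).PosSemidef ∧
    ((A - a₁ • (1 : Matrix (Fin N) (Fin N) ℝ))⁻¹).trace
      = (N : ℝ) / ((1 - θ) * (a₂ - a₁)) + θ / ((1 - θ) * a₁) :=
  stmt14_general a₁ a₂ θ ha₁ ha hθ e he m hm hmsum K A hK hA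
end

section
/- Let I ⊂ ℝ be a bounded open interval, and let 0 < a₁ ≤ a₂ and 0 < b₁ ≤ b₂. Let (a_n), (b_n) be sequences of measurable functions on I with a₁ ≤ a_n ≤ a₂ and b₁ ≤ b_n ≤ b₂ pointwise. Suppose 1/a_n ⇀ α, b_n/a_n² ⇀ β, and 1/b_n ⇀ γ in the weak* topology of L^∞(I). Then α(x)² ≤ β(x)γ(x) for almost every x ∈ I. In particular, defining a̲ = 1/α, b^# = a̲²β and b̲ = 1/γ, one has b^# ≥ b̲ almost everywhere. -/
/-!
A pointwise inequality that is linear in the converging functions passes to weak* limits.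
For every real `t` one has `b / a² + 2 t / a + t² / b = (b + t a)² / (a² b) ≥ 0`, hence
`β + 2 t α + t² γ ≥ 0` almost everywhere. Intersecting over rational `t` and using continuity
in `t`, this holds a.e. for all real `t` simultaneously, and `t = -α / γ` gives `α² ≤ β γ`.
-/

open MeasureTheory Filter Set Topology

variable {X : Type*} [MeasurableSpace X] {μ : Measure X}

def WeakStarTendsto (μ : Measure X) (F : ℕ → X → ℝ) (L : X → ℝ) : Prop :=
  ∀ φ : X → ℝ, Integrable φ μ →
    Tendsto (fun n => ∫ x, F n x * φ x ∂μ) atTop (𝓝 (∫ x, L x * φ x ∂μ))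

namespace WeakStarTendsto

variable [IsFiniteMeasure μ] {F : ℕ → X → ℝ} {L : X → ℝ}

theorem tendsto_setIntegral (h : WeakStarTendsto μ F L) {s : Set X} (hs : MeasurableSet s) :
    Tendsto (fun n => ∫ x in s, F n x ∂μ) atTop (𝓝 (∫ x in s, L x ∂μ)) := by
  have integral_mul_indicator (f : X → ℝ) :
      ∫ x, f x * s.indicator (fun _ => 1) x ∂μ = ∫ x in s, f x ∂μ := by
    simp_rw [← indicator_mul_right, mul_one]
    exact integral_indicator hs
  simpa only [integral_mul_indicator] using h _ ((integrable_const (1 : ℝ)).indicator hs)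

theorem setIntegral_const_le (h : WeakStarTendsto μ F L) (hF : ∀ n, Integrable (F n) μ)
    {m : ℝ} (hm : ∀ n, ∀ᵐ x ∂μ, m ≤ F n x) {s : Set X} (hs : MeasurableSet s) :
    ∫ _ in s, m ∂μ ≤ ∫ x in s, L x ∂μ :=
  ge_of_tendsto' (h.tendsto_setIntegral hs) fun n =>
    integral_mono_ae (integrable_const m) (hF n).integrableOn (ae_restrict_of_ae (hm n))

theorem integrable (h : WeakStarTendsto μ F L) (hF : ∀ n, Integrable (F n) μ) {m : ℝ}
    (hm : ∀ n, ∀ᵐ x ∂μ, m ≤ F n x) (hm₀ : 0 < m) : Integrable L μ := by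
  rcases eq_zero_or_neZero μ with rfl | _
  · exact integrable_zero_measure
  -- otherwise `∫ L` takes the junk value `0`, below the limit bound `m μ(X) > 0`
  by_contra hL
  have hint := h.setIntegral_const_le hF hm MeasurableSet.univ
  rw [Measure.restrict_univ, integral_const, integral_undef hL, smul_eq_mul] at hint
  exact (mul_pos measureReal_univ_pos hm₀).not_ge hint

theorem ae_le (h : WeakStarTendsto μ F L) (hF : ∀ n, Integrable (F n) μ) {m : ℝ}
    (hm : ∀ n, ∀ᵐ x ∂μ, m ≤ F n x) (hL : Integrable L μ) : ∀ᵐ x ∂μ, m ≤ L x :=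
  ae_le_of_forall_setIntegral_le (integrable_const m) hL fun _ hs _ =>
    h.setIntegral_const_le hF hm hs

theorem ae_nonneg_linear_combination {P Q R : ℕ → X → ℝ} {p q r : X → ℝ}
    (hP : WeakStarTendsto μ P p) (hQ : WeakStarTendsto μ Q q) (hR : WeakStarTendsto μ R r)
    (hPi : ∀ n, Integrable (P n) μ) (hQi : ∀ n, Integrable (Q n) μ)
    (hRi : ∀ n, Integrable (R n) μ) (hpi : Integrable p μ) (hqi : Integrable q μ)
    (hri : Integrable r μ) (u v w : ℝ)
    (hnn : ∀ n, ∀ᵐ x ∂μ, 0 ≤ u * P n x + v * Q n x + w * R n x) :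
    ∀ᵐ x ∂μ, 0 ≤ u * p x + v * q x + w * r x := by
  have split {f g k : X → ℝ} (hf : Integrable f μ) (hg : Integrable g μ)
      (hk : Integrable k μ) (s : Set X) : ∫ x in s, u * f x + v * g x + w * k x ∂μ
        = u * ∫ x in s, f x ∂μ + v * ∫ x in s, g x ∂μ + w * ∫ x in s, k x ∂μ := by
    rw [integral_add (f := fun x => u * f x + v * g x)
        ((hf.const_mul u).add (hg.const_mul v)).integrableOn
        (hk.const_mul w).integrableOn, integral_add (hf.const_mul u).integrableOn
        (hg.const_mul v).integrableOn, integral_const_mul, integral_const_mul, integral_const_mul]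
  refine ae_nonneg_of_forall_setIntegral_nonneg
    (((hpi.const_mul u).add (hqi.const_mul v)).add (hri.const_mul w)) fun s hs _ => ?_
  rw [split hpi hqi hri]
  refine ge_of_tendsto' ((((hP.tendsto_setIntegral hs).const_mul u).add
    ((hQ.tendsto_setIntegral hs).const_mul v)).add ((hR.tendsto_setIntegral hs).const_mul w))
    fun n => ?_
  rw [← split (hPi n) (hQi n) (hRi n)]
  exact integral_nonneg_of_ae (ae_restrict_of_ae (hnn n))

end WeakStarTendsto

theorem inv_mem_Icc_inv {x lo hi : ℝ} (hlo : 0 < lo) (hx : x ∈ Icc lo hi) :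
    x⁻¹ ∈ Icc hi⁻¹ lo⁻¹ :=
  ⟨inv_anti₀ (hlo.trans_le hx.1) hx.2, inv_anti₀ hlo hx.1⟩

theorem div_sq_mem_Icc {a b a₁ a₂ b₁ b₂ : ℝ} (ha₁ : 0 < a₁) (hb₁ : 0 ≤ b₁)
    (ha : a ∈ Icc a₁ a₂) (hb : b ∈ Icc b₁ b₂) : b / a ^ 2 ∈ Icc (b₁ / a₂ ^ 2) (b₂ / a₁ ^ 2) :=
  ⟨div_le_div₀ (hb₁.trans hb.1) hb.1 (pow_pos (ha₁.trans_le ha.1) 2)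
      (pow_le_pow_left₀ (ha₁.trans_le ha.1).le ha.2 2),
    div_le_div₀ (hb₁.trans (hb.1.trans hb.2)) hb.2 (by positivity)
      (pow_le_pow_left₀ ha₁.le ha.1 2)⟩

theorem div_sq_add_two_mul_inv_add_sq_mul_inv_nonneg {a b : ℝ} (ha : a ≠ 0) (hb : 0 < b)
    (t : ℝ) : 0 ≤ b / a ^ 2 + 2 * t * a⁻¹ + t ^ 2 * b⁻¹ := by
  have hsq : b / a ^ 2 + 2 * t * a⁻¹ + t ^ 2 * b⁻¹ = (b + t * a) ^ 2 / (a ^ 2 * b) := by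
    field_simp
    ring
  rw [hsq]
  positivity

theorem sq_le_mul_of_forall_quadratic_nonneg {p q r : ℝ} (hr : 0 < r)
    (h : ∀ t : ℚ, 0 ≤ p + 2 * t * q + t ^ 2 * r) : q ^ 2 ≤ p * r := by
  have hreal (t : ℝ) : 0 ≤ p + 2 * t * q + t ^ 2 * r :=
    Rat.denseRange_cast.induction_on t (isClosed_le continuous_const (by fun_prop)) h
  have hmin : (p + 2 * (-q / r) * q + (-q / r) ^ 2 * r) * r = p * r - q ^ 2 := by
    field_simp
    ring
  have := mul_nonneg (hreal (-q / r)) hr.le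
  rw [hmin] at this
  linarith

theorem stmt16_general (c d : ℝ) (a₁ a₂ b₁ b₂ : ℝ)
    (ha₁ : 0 < a₁) (ha : a₁ ≤ a₂) (hb₁ : 0 < b₁) (hb : b₁ ≤ b₂)
    (a b : ℕ → ℝ → ℝ) (α β γ : ℝ → ℝ)
    (ham : ∀ n, Measurable (a n)) (hbm : ∀ n, Measurable (b n))
    (hab : ∀ n x, a₁ ≤ a n x ∧ a n x ≤ a₂)
    (hbb : ∀ n x, b₁ ≤ b n x ∧ b n x ≤ b₂)
    (hα : ∀ φ : ℝ → ℝ, IntegrableOn φ (Set.Ioo c d) →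
      Tendsto (fun n => ∫ x in Set.Ioo c d, (a n x)⁻¹ * φ x) atTop
        (nhds (∫ x in Set.Ioo c d, α x * φ x)))
    (hβ : ∀ φ : ℝ → ℝ, IntegrableOn φ (Set.Ioo c d) →
      Tendsto (fun n => ∫ x in Set.Ioo c d, (b n x / (a n x) ^ 2) * φ x) atTop
        (nhds (∫ x in Set.Ioo c d, β x * φ x)))
    (hγ : ∀ φ : ℝ → ℝ, IntegrableOn φ (Set.Ioo c d) →
      Tendsto (fun n => ∫ x in Set.Ioo c d, (b n x)⁻¹ * φ x) atTop
        (nhds (∫ x in Set.Ioo c d, γ x * φ x))) :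
    ∀ᵐ x ∂(volume.restrict (Set.Ioo c d)),
      α x ^ 2 ≤ β x * γ x ∧ (γ x)⁻¹ ≤ ((α x)⁻¹) ^ 2 * β x := by
  set μ := volume.restrict (Ioo c d)
  replace hα : WeakStarTendsto μ (fun n x => (a n x)⁻¹) α := hα
  replace hβ : WeakStarTendsto μ (fun n x => b n x / a n x ^ 2) β := hβ
  replace hγ : WeakStarTendsto μ (fun n x => (b n x)⁻¹) γ := hγ
  have ha₂ : 0 < a₂ := ha₁.trans_le ha
  have hb₂ : 0 < b₂ := hb₁.trans_le hb
  have hA n : ∀ᵐ x ∂μ, (a n x)⁻¹ ∈ Icc a₂⁻¹ a₁⁻¹ :=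
    ae_of_all _ fun x => inv_mem_Icc_inv ha₁ (hab n x)
  have hB n : ∀ᵐ x ∂μ, b n x / a n x ^ 2 ∈ Icc (b₁ / a₂ ^ 2) (b₂ / a₁ ^ 2) :=
    ae_of_all _ fun x => div_sq_mem_Icc ha₁ hb₁.le (hab n x) (hbb n x)
  have hC n : ∀ᵐ x ∂μ, (b n x)⁻¹ ∈ Icc b₂⁻¹ b₁⁻¹ :=
    ae_of_all _ fun x => inv_mem_Icc_inv hb₁ (hbb n x)
  have hAi n := Integrable.of_mem_Icc _ _ (ham n).inv.aemeasurable (hA n)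
  have hBi n :=
    Integrable.of_mem_Icc _ _ ((hbm n).div ((ham n).pow_const 2)).aemeasurable (hB n)
  have hCi n := Integrable.of_mem_Icc _ _ (hbm n).inv.aemeasurable (hC n)
  have hαi := hα.integrable hAi (fun n => (hA n).mono fun _ h => h.1) (inv_pos.2 ha₂)
  have hβi := hβ.integrable hBi (fun n => (hB n).mono fun _ h => h.1) (by positivity)
  have hγi := hγ.integrable hCi (fun n => (hC n).mono fun _ h => h.1) (inv_pos.2 hb₂)
  have hquad (t : ℚ) : ∀ᵐ x ∂μ, 0 ≤ 1 * β x + 2 * t * α x + t ^ 2 * γ x :=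
    hβ.ae_nonneg_linear_combination hα hγ hBi hAi hCi hβi hαi hγi 1 (2 * t) (t ^ 2) fun n =>
      ae_of_all _ fun x => by
        simpa only [one_mul] using div_sq_add_two_mul_inv_add_sq_mul_inv_nonneg
          (ha₁.trans_le (hab n x).1).ne' (hb₁.trans_le (hbb n x).1) t
  filter_upwards [ae_all_iff.2 hquad, hα.ae_le hAi (fun n => (hA n).mono fun _ h => h.1) hαi,
    hγ.ae_le hCi (fun n => (hC n).mono fun _ h => h.1) hγi] with x hx hαx hγx
  have hα0 : 0 < α x := (inv_pos.2 ha₂).trans_le hαx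
  have hγ0 : 0 < γ x := (inv_pos.2 hb₂).trans_le hγx
  have key := sq_le_mul_of_forall_quadratic_nonneg hγ0 fun t => by
    simpa only [one_mul] using hx t
  refine ⟨key, ?_⟩
  rw [inv_pow, inv_mul_eq_div, le_div_iff₀ (pow_pos hα0 2), inv_mul_le_iff₀ hγ0, mul_comm]
  exact key

/-- One-dimensional Cauchy–Schwarz for weak* limits: if `1/aₙ ⇀ α`,
`bₙ/aₙ² ⇀ β`, `1/bₙ ⇀ γ` weak* in `L^∞(I)` for two-phase-type coefficients,
then `α² ≤ βγ` a.e.; in particular `b^# = β/α² ≥ 1/γ = b̲` a.e. -/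
theorem stmt16 (c d : ℝ) (hcd : c < d) (a₁ a₂ b₁ b₂ : ℝ)
    (ha₁ : 0 < a₁) (ha : a₁ ≤ a₂) (hb₁ : 0 < b₁) (hb : b₁ ≤ b₂)
    (a b : ℕ → ℝ → ℝ) (α β γ : ℝ → ℝ)
    (ham : ∀ n, Measurable (a n)) (hbm : ∀ n, Measurable (b n))
    (hab : ∀ n x, a₁ ≤ a n x ∧ a n x ≤ a₂)
    (hbb : ∀ n x, b₁ ≤ b n x ∧ b n x ≤ b₂)
    (hα : ∀ φ : ℝ → ℝ, IntegrableOn φ (Set.Ioo c d) →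
      Tendsto (fun n => ∫ x in Set.Ioo c d, (a n x)⁻¹ * φ x) atTop
        (nhds (∫ x in Set.Ioo c d, α x * φ x)))
    (hβ : ∀ φ : ℝ → ℝ, IntegrableOn φ (Set.Ioo c d) →
      Tendsto (fun n => ∫ x in Set.Ioo c d, (b n x / (a n x) ^ 2) * φ x) atTop
        (nhds (∫ x in Set.Ioo c d, β x * φ x)))
    (hγ : ∀ φ : ℝ → ℝ, IntegrableOn φ (Set.Ioo c d) →
      Tendsto (fun n => ∫ x in Set.Ioo c d, (b n x)⁻¹ * φ x) atTop
        (nhds (∫ x in Set.Ioo c d, γ x * φ x))) :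
    ∀ᵐ x ∂(volume.restrict (Set.Ioo c d)),
      α x ^ 2 ≤ β x * γ x ∧ (γ x)⁻¹ ≤ ((α x)⁻¹) ^ 2 * β x :=
  stmt16_general c d a₁ a₂ b₁ b₂ ha₁ ha hb₁ hb a b α β γ ham hbm hab hbb hα hβ hγ
end
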